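/- arXiv:2303.06320 — 4 statements merged into one kernel-verified Lean document; each statement's English description precedes it below -/
import Mathlib

section
/- If a nonempty set B ⊆ ℤ^V satisfies (BS-EXC), then B satisfies (Δ-EXC). That is, if for every p, q ∈ B there exist α₁,…,α_k ∈ Φ_B(p,q) with p + (1/2)·Σᵢ αᵢ = q, then for every p, q ∈ B and every u ∈ supp(q − p), there exists α ∈ Φ_B(p,q) with u ∈ supp(α). -/
open Finset

/-- 1-norm of an integer vector. -/
def normOne {V : Type*} [Fintype V] (t : V → ℤ) : ℤ := ∑ u, |t u|

/-- Membership in the discrete cube `{-1,0,1}^V`. -/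
def InCube {V : Type*} (x : V → ℤ) : Prop := ∀ u, x u = -1 ∨ x u = 0 ∨ x u = 1

/-- `Φ`: vectors in `{-1,0,1}^V` with 1-norm 1 or 2. -/
def InPhi {V : Type*} [Fintype V] (α : V → ℤ) : Prop :=
  InCube α ∧ (normOne α = 1 ∨ normOne α = 2)

/-- `Φ(p,q)`. -/
def InPhiPQ {V : Type*} [Fintype V] (p q α : V → ℤ) : Prop :=
  InPhi α ∧ normOne (q - (p + α)) = normOne (q - p) - normOne α

/-- `Φ_B(p,q)`. -/
def InPhiB {V : Type*} [Fintype V] (B : Set (V → ℤ)) (p q α : V → ℤ) : Prop :=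
  InPhiPQ p q α ∧ p + α ∈ B

/-- The exchange axiom (Δ-EXC). -/
def DeltaEXC {V : Type*} [Fintype V] (B : Set (V → ℤ)) : Prop :=
  ∀ p ∈ B, ∀ q ∈ B, ∀ u : V, q u ≠ p u → ∃ α, InPhiB B p q α ∧ α u ≠ 0

theorem stmt3_general {V : Type*} [Fintype V]
    (B : Set (V → ℤ))
    (hbs : ∀ p ∈ B, ∀ q ∈ B, ∃ L : List (V → ℤ),
      (∀ α ∈ L, InPhiB B p q α) ∧ L.sum = (2 : ℤ) • (q - p)) :
    DeltaEXC B := by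
  intro p hp q hq u hu
  obtain ⟨L, hL, hsum⟩ := hbs p hp q hq
  have hsum_u : (L.map (· u)).sum ≠ 0 := by
    rw [← Pi.list_sum_apply, hsum, Pi.smul_apply, Pi.sub_apply, smul_eq_mul]
    omega
  obtain ⟨_, hmem, hα_u⟩ := List.exists_mem_ne_zero_of_sum_ne_zero hsum_u
  obtain ⟨α, hα, rfl⟩ := List.mem_map.1 hmem
  exact ⟨α, hL α hα, hα_u⟩

theorem stmt3 {V : Type*} [Fintype V] [Nonempty V]
    (B : Set (V → ℤ)) (hne : B.Nonempty)
    (hbs : ∀ p ∈ B, ∀ q ∈ B, ∃ L : List (V → ℤ),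
      (∀ α ∈ L, InPhiB B p q α) ∧ L.sum = (2 : ℤ) • (q - p)) :
    DeltaEXC B :=
  stmt3_general B hbs
end

section
/- Lemma 4 (exchange lemma): Let B ⊆ ℤ^V satisfy (Δ-EXC), and let q, r ∈ B with q ≠ r. Then there exist α₁,…,α_k ∈ Φ_B(q, r) and β₁,…,β_l ∈ Φ_B(r, q) such that Σᵢ αᵢ + Σⱼ βⱼ = 0. -/
open Finset

/-!
A positive multiple of `r - q` is a sum of elements of `Φ_B(q, r)`, and symmetrically; suitable
multiples of the two sums then cancel. By the integral Farkas lemma the first claim can only fail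
if some weight `w` is nonnegative on `Φ_B(q, r)` but negative on `r - q`. Such a `w` is excluded
by induction on `‖r - q‖₁`: for `β ∈ Φ_B(r, q)` we have `Φ_B(q, r + β) ⊆ Φ_B(q, r)`, so induction
gives `w ⬝ᵥ β ≥ -(w ⬝ᵥ (r - q)) > 0` for all such `β`. Applying (Δ-EXC) at a coordinate `v`
maximising the signed weight `w v * sign (r v - q v)`, first from `r` and then from `q` at the
partner coordinate of the resulting `β`, contradicts this.
-/

section

variable {ι M : Type*}

lemma AddSubmonoid.zsmul_mem_of_nonneg [AddGroup M] {S : AddSubmonoid M} {a : M} (ha : a ∈ S)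
    {k : ℤ} (hk : 0 ≤ k) : k • a ∈ S := by
  lift k to ℕ using hk
  rw [natCast_zsmul]
  exact S.nsmul_mem ha k

/-- Farkas' lemma for finitely many integer vectors, by Fourier–Motzkin elimination. -/
theorem exists_pos_zsmul_mem_closure_or_exists_dotProduct_neg [Fintype ι] :
    ∀ (S : List (ι → ℤ)) (x : ι → ℤ),
      (∃ c : ℤ, 0 < c ∧ c • x ∈ AddSubmonoid.closure {a | a ∈ S}) ∨
      ∃ w : ι → ℤ, (∀ a ∈ S, 0 ≤ w ⬝ᵥ a) ∧ w ⬝ᵥ x < 0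
  | [], x => by
    by_cases hx : x = 0
    · exact .inl ⟨1, one_pos, by simp [hx, zero_mem]⟩
    · refine .inr ⟨-x, by simp, ?_⟩
      have hpos : 0 < x ⬝ᵥ x := lt_of_le_of_ne (Fintype.sum_nonneg fun _ => mul_self_nonneg _)
        (Ne.symm (dotProduct_self_eq_zero.not.mpr hx))
      simpa using hpos
  | a :: S, x => by
    have hmono : AddSubmonoid.closure {b | b ∈ S} ≤ AddSubmonoid.closure {b | b ∈ a :: S} :=
      AddSubmonoid.closure_mono fun b hb => List.mem_cons_of_mem a hb
    have hmem : ∀ b ∈ a :: S, b ∈ AddSubmonoid.closure {b | b ∈ a :: S} := fun b hb =>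
      AddSubmonoid.subset_closure hb
    rcases exists_pos_zsmul_mem_closure_or_exists_dotProduct_neg S x with
      ⟨c, hc, hcx⟩ | ⟨w', hw'S, hw'x⟩
    · exact .inl ⟨c, hc, hmono hcx⟩
    by_cases hw'a : 0 ≤ w' ⬝ᵥ a
    · exact .inr ⟨w', by simpa [hw'a] using hw'S, hw'x⟩
    -- project along `a` onto the hyperplane `w' ⬝ᵥ · = 0`, scaled to stay integral
    set d := -(w' ⬝ᵥ a) with hd
    have hdpos : 0 < d := by omega
    let π : (ι → ℤ) → ι → ℤ := fun y => d • y + (w' ⬝ᵥ y) • a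
    rcases exists_pos_zsmul_mem_closure_or_exists_dotProduct_neg (S.map π) (π x) with
      ⟨c, hc, hcx⟩ | ⟨w, hwS, hwx⟩
    · have hle : AddSubmonoid.closure {b | b ∈ S.map π} ≤
          AddSubmonoid.closure {b | b ∈ a :: S} := by
        rw [AddSubmonoid.closure_le]
        rintro _ hb
        obtain ⟨y, hy, rfl⟩ := List.mem_map.mp hb
        exact add_mem
          (AddSubmonoid.zsmul_mem_of_nonneg (hmem y (List.mem_cons_of_mem a hy)) hdpos.le)
          (AddSubmonoid.zsmul_mem_of_nonneg (hmem a List.mem_cons_self) (hw'S y hy))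
      refine .inl ⟨c * d, mul_pos hc hdpos, ?_⟩
      have hsplit : (c * d) • x = c • π x + (c * -(w' ⬝ᵥ x)) • a := by
        simp only [π]; module
      rw [hsplit]
      exact add_mem (hle hcx)
        (AddSubmonoid.zsmul_mem_of_nonneg (hmem a List.mem_cons_self) (by nlinarith))
    · have hdot : ∀ y, (d • w + (w ⬝ᵥ a) • w') ⬝ᵥ y = w ⬝ᵥ π y := by
        intro y
        simp only [π, add_dotProduct, dotProduct_add, smul_dotProduct, dotProduct_smul,
          smul_eq_mul, dotProduct_comm w' y]
        ring
      refine .inr ⟨d • w + (w ⬝ᵥ a) • w', ?_, by rwa [hdot]⟩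
      intro b hb
      rw [hdot]
      rcases List.mem_cons.mp hb with rfl | hb
      · simp [π, hd]
      · exact hwS _ (List.mem_map_of_mem hb)
termination_by S => S.length

end

lemma Int.sign_spec (x : ℤ) :
    (x.sign = 1 ∧ 0 < x) ∨ (x.sign = 0 ∧ x = 0) ∨ (x.sign = -1 ∧ x < 0) := by
  rcases Int.sign_trichotomy x with h | h | h <;>
    simp_all [Int.sign_eq_one_iff_pos, Int.sign_eq_neg_one_iff_neg]

lemma Int.abs_sub_eq_abs_sub_abs_iff {d a : ℤ} (ha : a = -1 ∨ a = 0 ∨ a = 1) :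
    |d - a| = |d| - |a| ↔ a = 0 ∨ a = d.sign := by
  have := Int.sign_spec d
  rcases abs_cases (d - a) with h | h <;> rcases abs_cases d with h' | h' <;>
    rcases abs_cases a with h'' | h'' <;> omega

section

variable {V : Type*}

def SignConformal (d α : V → ℤ) : Prop := ∀ u, α u = 0 ∨ α u = (d u).sign

lemma SignConformal.ne_zero {d α : V → ℤ} (h : SignConformal d α) {u : V} (hu : α u ≠ 0) :
    d u ≠ 0 := by
  have := Int.sign_spec (d u); have := h u; omega

lemma SignConformal.of_add {d β α : V → ℤ} (hβ : SignConformal (-d) β)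
    (hα : SignConformal (d + β) α) : SignConformal d α := by
  intro u
  have := hβ u; have := hα u
  have := Int.sign_spec (d u); have := Int.sign_spec (-d u); have := Int.sign_spec (d u + β u)
  simp only [Pi.add_apply, Pi.neg_apply] at *
  omega

variable [Fintype V]

lemma inPhiPQ_iff {p q α : V → ℤ} : InPhiPQ p q α ↔ InPhi α ∧ SignConformal (q - p) α := by
  refine and_congr_right fun hα => ?_
  have hle : ∀ u ∈ univ, |q u - p u| - |α u| ≤ |q u - (p u + α u)| := fun u _ => by
    simpa [sub_sub] using abs_sub_abs_le_abs_sub (q u - p u) (α u)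
  rw [normOne, normOne, normOne, ← sum_sub_distrib, eq_comm]
  simp only [Pi.sub_apply, Pi.add_apply]
  rw [sum_eq_sum_iff_of_le hle]
  refine forall_congr' fun u => ?_
  rw [← sub_sub, eq_comm, Int.abs_sub_eq_abs_sub_abs_iff (hα.1 u)]
  simp

lemma normOne_eq_card_support {α : V → ℤ} (hα : InCube α) :
    normOne α = (univ.filter (α · ≠ 0)).card := by
  rw [normOne, card_eq_sum_ones, Nat.cast_sum, sum_filter]
  refine sum_congr rfl fun u _ => ?_
  rcases hα u with h | h | h <;> simp [h]

lemma dotProduct_eq_sum_support {d α : V → ℤ} (hα : SignConformal d α) (w : V → ℤ) :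
    w ⬝ᵥ α = ∑ u ∈ univ.filter (α · ≠ 0), w u * (d u).sign := by
  rw [dotProduct, sum_filter]
  refine sum_congr rfl fun u _ => ?_
  rcases hα u with h | h <;> simp +contextual [h]

/-- Elements of `Φ` have support of size one or two. -/
lemma SignConformal.dotProduct_eq_or_exists {d α : V → ℤ} (hc : SignConformal d α)
    (hα : InPhi α) (w : V → ℤ) {v : V} (hv : α v ≠ 0) :
    w ⬝ᵥ α = w v * (d v).sign ∨
      ∃ u, d u ≠ 0 ∧ w ⬝ᵥ α = w v * (d v).sign + w u * (d u).sign := by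
  have hnorm := normOne_eq_card_support hα.1
  classical
  set s := univ.filter (α · ≠ 0)
  have hvs : v ∈ s := by simpa [s] using hv
  have hcard : (s.erase v).card = 0 ∨ (s.erase v).card = 1 := by
    rw [card_erase_of_mem hvs]
    rcases hα.2 with h | h <;> omega
  rw [dotProduct_eq_sum_support hc, ← add_sum_erase s _ hvs]
  rcases hcard with h | h
  · simp [card_eq_zero.mp h]
  · obtain ⟨u, hu⟩ := card_eq_one.mp h
    have hus : u ∈ s := mem_of_mem_erase (hu ▸ mem_singleton_self u)
    exact .inr ⟨u, hc.ne_zero (mem_filter.mp hus).2, by simp [hu]⟩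

lemma normOne_sub_comm (x y : V → ℤ) : normOne (x - y) = normOne (y - x) := by
  simp only [normOne, Pi.sub_apply, abs_sub_comm]

lemma normOne_nonneg (x : V → ℤ) : 0 ≤ normOne x :=
  sum_nonneg fun u _ => abs_nonneg (x u)

lemma InPhiPQ.normOne_add_sub_lt {q r β : V → ℤ} (hβ : InPhiPQ r q β) :
    normOne (r + β - q) < normOne (r - q) := by
  have hβpos : 0 < normOne β := by rcases hβ.1.2 with h | h <;> omega
  have := hβ.2
  rw [normOne_sub_comm q, normOne_sub_comm q] at this
  omega

lemma InPhiPQ.inPhiB_of_inPhiB_add {B : Set (V → ℤ)} {q r β α : V → ℤ} (hβ : InPhiPQ r q β)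
    (hα : InPhiB B q (r + β) α) : InPhiB B q r α := by
  obtain ⟨hαΦ, hαc⟩ := inPhiPQ_iff.1 hα.1
  have hβc := (inPhiPQ_iff.1 hβ).2
  rw [← neg_sub] at hβc
  rw [add_sub_right_comm] at hαc
  exact ⟨inPhiPQ_iff.2 ⟨hαΦ, hβc.of_add hαc⟩, hα.2⟩

lemma InPhiB.dotProduct_eq_or_exists {B : Set (V → ℤ)} {p q α : V → ℤ} (hα : InPhiB B p q α)
    (w : V → ℤ) {v : V} (hv : α v ≠ 0) :
    w ⬝ᵥ α = w v * ((q - p) v).sign ∨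
      ∃ u, (q - p) u ≠ 0 ∧ w ⬝ᵥ α = w v * ((q - p) v).sign + w u * ((q - p) u).sign :=
  have h := inPhiPQ_iff.1 hα.1
  h.2.dotProduct_eq_or_exists h.1 w hv

lemma DeltaEXC.exists_inPhiB_dotProduct_lt {B : Set (V → ℤ)} (hB : DeltaEXC B) {q r : V → ℤ}
    (hq : q ∈ B) (hr : r ∈ B) {w : V → ℤ} (hw : ∀ α, InPhiB B q r α → 0 ≤ w ⬝ᵥ α)
    (hneg : w ⬝ᵥ (r - q) < 0) : ∃ β, InPhiB B r q β ∧ w ⬝ᵥ β < -(w ⬝ᵥ (r - q)) := by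
  set d := r - q with hd
  have hsupp : (univ.filter (d · ≠ 0)).Nonempty := by
    by_contra! h
    have : d = 0 := funext fun u => by simpa using filter_eq_empty_iff.mp h (mem_univ u)
    simp [this] at hneg
  let g u := w u * (d u).sign
  obtain ⟨v, hv, hvmax⟩ := exists_max_image _ g hsupp
  replace hv : d v ≠ 0 := (mem_filter.mp hv).2
  replace hvmax : ∀ u, d u ≠ 0 → g u ≤ g v := fun u hu => hvmax u (by simpa using hu)
  have hexc : ∀ u, d u ≠ 0 → ∃ α, InPhiB B q r α ∧ α u ≠ 0 := fun u hu =>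
    hB q hq r hr u (sub_ne_zero.mp hu)
  rcases lt_or_ge (g v) 0 with hgv | hgv
  · obtain ⟨α, hα, hαv⟩ := hexc v hv
    have := hw α hα
    rcases hα.dotProduct_eq_or_exists w hαv with h | ⟨u, hu, h⟩
    · simp only [g] at hgv; linarith
    · have := hvmax u hu; simp only [g] at *; linarith
  obtain ⟨β, hβ, hβv⟩ := hB r hr q hq v (Ne.symm (sub_ne_zero.mp hv))
  refine ⟨β, hβ, ?_⟩
  by_contra! hβw
  have hsign : ∀ u, ((q - r) u).sign = -(d u).sign := fun u => by
    simp [hd, ← Int.sign_neg]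
  obtain ⟨v', hv', hgv'⟩ : ∃ v', d v' ≠ 0 ∧ g v' ≤ -g v + w ⬝ᵥ d := by
    rcases hβ.dotProduct_eq_or_exists w hβv with h | ⟨u, hu, h⟩ <;>
      simp only [hsign, mul_neg] at h
    · simp only [g] at hgv; linarith
    · exact ⟨u, by simpa [hd, sub_eq_zero, eq_comm] using hu, by simp only [g]; linarith⟩
  obtain ⟨α, hα, hαv'⟩ := hexc v' hv'
  have := hw α hα
  rcases hα.dotProduct_eq_or_exists w hαv' with h | ⟨u, hu, h⟩
  · simp only [g] at *; linarith
  · have := hvmax u hu; simp only [g] at *; linarith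

theorem DeltaEXC.dotProduct_sub_nonneg {B : Set (V → ℤ)} (hB : DeltaEXC B) {q r : V → ℤ}
    (hq : q ∈ B) (hr : r ∈ B) {w : V → ℤ} (hw : ∀ α, InPhiB B q r α → 0 ≤ w ⬝ᵥ α) :
    0 ≤ w ⬝ᵥ (r - q) := by
  by_contra! hneg
  obtain ⟨β, hβ, hβw⟩ := hB.exists_inPhiB_dotProduct_lt hq hr hw hneg
  have := hB.dotProduct_sub_nonneg hq hβ.2 fun α hα => hw α (hβ.1.inPhiB_of_inPhiB_add hα)
  rw [add_sub_right_comm, dotProduct_add] at this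
  linarith
termination_by (normOne (r - q)).toNat
decreasing_by
  have := hβ.1.normOne_add_sub_lt
  have := normOne_nonneg (r + β - q)
  omega

lemma finite_setOf_inPhiB (B : Set (V → ℤ)) (p q : V → ℤ) : {α | InPhiB B p q α}.Finite :=
  (Set.Finite.pi fun _ => Set.finite_Icc (-1 : ℤ) 1).subset fun α hα u _ => by
    rcases hα.1.1.1 u with h | h | h <;> simp [h]

theorem DeltaEXC.exists_zsmul_sub_mem_closure {B : Set (V → ℤ)} (hB : DeltaEXC B)
    {q r : V → ℤ} (hq : q ∈ B) (hr : r ∈ B) :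
    ∃ c : ℤ, 0 < c ∧ c • (r - q) ∈ AddSubmonoid.closure {α | InPhiB B q r α} := by
  have hS : {α | α ∈ (finite_setOf_inPhiB B q r).toFinset.toList} = {α | InPhiB B q r α} := by
    ext; simp
  rcases exists_pos_zsmul_mem_closure_or_exists_dotProduct_neg
    (finite_setOf_inPhiB B q r).toFinset.toList (r - q) with h | ⟨w, hw, hneg⟩
  · rwa [hS] at h
  · exact absurd (hB.dotProduct_sub_nonneg hq hr fun α hα => hw α (by simpa using hα))
      (not_le.mpr hneg)

end

theorem stmt11_general {V : Type*} [Fintype V]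
    (B : Set (V → ℤ)) (h : DeltaEXC B)
    (q r : V → ℤ) (hq : q ∈ B) (hr : r ∈ B) (hqr : q ≠ r) :
    ∃ (L M : List (V → ℤ)), L ≠ [] ∧ M ≠ [] ∧
      (∀ α ∈ L, InPhiB B q r α) ∧ (∀ β ∈ M, InPhiB B r q β) ∧
      L.sum + M.sum = 0 := by
  obtain ⟨m, hm, hm_mem⟩ := h.exists_zsmul_sub_mem_closure hq hr
  obtain ⟨n, hn, hn_mem⟩ := h.exists_zsmul_sub_mem_closure hr hq
  obtain ⟨L, hLΦ, hLsum⟩ :=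
    AddSubmonoid.exists_list_of_mem_closure (AddSubmonoid.zsmul_mem_of_nonneg hm_mem hn.le)
  obtain ⟨M, hMΦ, hMsum⟩ :=
    AddSubmonoid.exists_list_of_mem_closure (AddSubmonoid.zsmul_mem_of_nonneg hn_mem hm.le)
  refine ⟨L, M, ?_, ?_, hLΦ, hMΦ, ?_⟩
  · rintro rfl
    rw [List.sum_nil, eq_comm, smul_smul, smul_eq_zero, sub_eq_zero] at hLsum
    exact hLsum.elim (mul_pos hn hm).ne' (Ne.symm hqr)
  · rintro rfl
    rw [List.sum_nil, eq_comm, smul_smul, smul_eq_zero, sub_eq_zero] at hMsum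
    exact hMsum.elim (mul_pos hm hn).ne' hqr
  · rw [hLsum, hMsum, smul_smul, smul_smul, mul_comm, ← smul_add, sub_add_sub_cancel,
      sub_self, smul_zero]

theorem stmt11 {V : Type*} [Fintype V] [Nonempty V]
    (B : Set (V → ℤ)) (h : DeltaEXC B)
    (q r : V → ℤ) (hq : q ∈ B) (hr : r ∈ B) (hqr : q ≠ r) :
    ∃ (L M : List (V → ℤ)), L ≠ [] ∧ M ≠ [] ∧
      (∀ α ∈ L, InPhiB B q r α) ∧ (∀ β ∈ M, InPhiB B r q β) ∧
      L.sum + M.sum = 0 :=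
  stmt11_general B h q r hq hr hqr
end

section
/- Lemma 6 (first part): Let B = P(f) ∩ ℤ^V for an integral bisubmodular function f, p ∈ B, and s_u ∈ {±χ_u}, s_v ∈ {±χ_v} for u, v ∈ V. If s_u ∈ Φ_B(p) and −s_u + s_v ∈ Φ_B(p), then s_v ∈ Φ_B(p). Here Φ_B(p) = {α ∈ Φ : p + α ∈ B}, and this may be proved from the characterizations: for s ∈ {±χ_w}, s ∈ Φ_B(p) iff dep(p, s) = 0; and for p + s ∉ B with s = s_u ≠ ±s_v, s + s_v ∈ Φ_B(p) iff −s_v ⪯ dep(p, s). -/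
open Finset

/-- The operation `⊓` on `{-1,0,1}^V`. -/
def sqcap {V : Type*} (x y : V → ℤ) : V → ℤ := fun u => if x u = y u then x u else 0

/-- The operation `⊔` on `{-1,0,1}^V`. -/
def sqcup {V : Type*} (x y : V → ℤ) : V → ℤ := fun u =>
  if x u = y u ∨ y u = 0 then x u else if x u = 0 then y u else 0

/-- `f` is bisubmodular (on the cube, with values in `ℤ ∪ {+∞}`). -/
def Bisubmodular {V : Type*} (f : (V → ℤ) → WithTop ℤ) : Prop :=
  ∀ x y : V → ℤ, InCube x → InCube y →
    f (sqcap x y) + f (sqcup x y) ≤ f x + f y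

/-- Membership of a real vector in the bisubmodular polyhedron `P(f)`. -/
def MemP {V : Type*} [Fintype V] (f : (V → ℤ) → WithTop ℤ) (p : V → ℝ) : Prop :=
  ∀ x : V → ℤ, InCube x → ∀ c : ℤ, f x = (c : WithTop ℤ) →
    ∑ u, p u * (x u : ℝ) ≤ (c : ℝ)

/-- The embedding `ℤ^V → ℝ^V`. -/
def toReal {V : Type*} (p : V → ℤ) : V → ℝ := fun u => (p u : ℝ)

open scoped Classical in
/-- Iterated `⊓` over a set of vectors, with `⊓ ∅ = 0`. -/
noncomputable def bigSqcap {V : Type*} (S : Set (V → ℤ)) : V → ℤ := fun u =>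
  if S.Nonempty ∧ ∀ x ∈ S, x u = 1 then 1
  else if S.Nonempty ∧ ∀ x ∈ S, x u = -1 then -1 else 0

/-- `dep(p, s)` for a signed unit vector `s`. -/
noncomputable def dep {V : Type*} [Fintype V] (f : (V → ℤ) → WithTop ℤ)
    (p s : V → ℤ) : V → ℤ :=
  bigSqcap {x : V → ℤ | InCube x ∧ (∀ w, s w ≠ 0 → x w = s w) ∧
    ((∑ u, p u * x u : ℤ) : WithTop ℤ) = f x}

/-- The partial order `⪯` on `{-1,0,1}^V`. -/
def Preceq {V : Type*} (x y : V → ℤ) : Prop := ∀ u, x u ≠ 0 → y u = x u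

/-- The set of integer points of `P(f)`. -/
def BSet {V : Type*} [Fintype V] (f : (V → ℤ) → WithTop ℤ) : Set (V → ℤ) :=
  {p : V → ℤ | ∀ x : V → ℤ, InCube x → ∀ c : ℤ, f x = (c : WithTop ℤ) →
    ∑ u, p u * x u ≤ c}

theorem not_preceq_zero {V : Type*} {x : V → ℤ} (hx : x ≠ 0) : ¬ Preceq x 0 := by
  intro h
  obtain ⟨u, hu⟩ := Function.ne_iff.mp hx
  exact hu (h u hu).symm

section SignedUnit

variable {V : Type*} [DecidableEq V] {w : V} {s : V → ℤ}

theorem signedUnit_neg (hs : s = Pi.single w 1 ∨ s = -Pi.single w 1) :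
    -s = Pi.single w 1 ∨ -s = -Pi.single w 1 := by
  rcases hs with rfl | rfl
  · exact .inr rfl
  · exact .inl (neg_neg _)

theorem signedUnit_ne_zero (hs : s = Pi.single w 1 ∨ s = -Pi.single w 1) : s ≠ 0 := by
  rcases hs with rfl | rfl <;> simp

end SignedUnit

theorem stmt12_general {V : Type*} [Fintype V] [DecidableEq V]
    (f : (V → ℤ) → WithTop ℤ)
    (p : V → ℤ)
    (hlem1 : ∀ (w : V) (s : V → ℤ),
      (s = Pi.single w 1 ∨ s = -Pi.single w 1) →
      (p + s ∈ BSet f ↔ dep f p s = 0))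
    (hlem2 : ∀ (w w' : V), w ≠ w' → ∀ s t : V → ℤ,
      (s = Pi.single w 1 ∨ s = -Pi.single w 1) →
      (t = Pi.single w' 1 ∨ t = -Pi.single w' 1) →
      p + s ∉ BSet f → (p + (s + t) ∈ BSet f ↔ Preceq (-t) (dep f p s)))
    (hlem3 : ∀ (w w' : V) (s t : V → ℤ),
      (s = Pi.single w 1 ∨ s = -Pi.single w 1) →
      (t = Pi.single w' 1 ∨ t = -Pi.single w' 1) →
      Preceq s (dep f p t) →
      Preceq s (dep f p s) ∧ Preceq (dep f p s) (dep f p t))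
    (u v : V) (huv : u ≠ v) (su sv : V → ℤ)
    (hsu : su = Pi.single u 1 ∨ su = -Pi.single u 1)
    (hsv : sv = Pi.single v 1 ∨ sv = -Pi.single v 1)
    (h1 : p + su ∈ BSet f) (h2 : p + (-su + sv) ∈ BSet f) :
    p + sv ∈ BSet f := by
  by_contra hsv_out
  have hsu_dep_sv : Preceq su (dep f p sv) := by
    have h2' : p + (sv + -su) ∈ BSet f := by rwa [add_comm sv]
    simpa only [neg_neg] using
      (hlem2 v u huv.symm sv (-su) hsv (signedUnit_neg hsu) hsv_out).mp h2'
  have hsu_dep_su : Preceq su (dep f p su) := (hlem3 u v su sv hsu hsv hsu_dep_sv).1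
  rw [(hlem1 u su hsu).mp h1] at hsu_dep_su
  exact not_preceq_zero (signedUnit_ne_zero hsu) hsu_dep_su

theorem stmt12 {V : Type*} [Fintype V] [DecidableEq V] [Nonempty V]
    (f : (V → ℤ) → WithTop ℤ) (hf0 : f 0 = 0) (hf : Bisubmodular f)
    (p : V → ℤ) (hp : p ∈ BSet f)
    (hlem1 : ∀ (w : V) (s : V → ℤ),
      (s = Pi.single w 1 ∨ s = -Pi.single w 1) →
      (p + s ∈ BSet f ↔ dep f p s = 0))
    (hlem2 : ∀ (w w' : V), w ≠ w' → ∀ s t : V → ℤ,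
      (s = Pi.single w 1 ∨ s = -Pi.single w 1) →
      (t = Pi.single w' 1 ∨ t = -Pi.single w' 1) →
      p + s ∉ BSet f → (p + (s + t) ∈ BSet f ↔ Preceq (-t) (dep f p s)))
    (hlem3 : ∀ (w w' : V) (s t : V → ℤ),
      (s = Pi.single w 1 ∨ s = -Pi.single w 1) →
      (t = Pi.single w' 1 ∨ t = -Pi.single w' 1) →
      Preceq s (dep f p t) →
      Preceq s (dep f p s) ∧ Preceq (dep f p s) (dep f p t))
    (u v : V) (huv : u ≠ v) (su sv : V → ℤ)
    (hsu : su = Pi.single u 1 ∨ su = -Pi.single u 1)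
    (hsv : sv = Pi.single v 1 ∨ sv = -Pi.single v 1)
    (h1 : p + su ∈ BSet f) (h2 : p + (-su + sv) ∈ BSet f) :
    p + sv ∈ BSet f :=
  stmt12_general f p hlem1 hlem2 hlem3 u v huv su sv hsu hsv h1 h2
end

section
/- Lemma 6 (second part): Let B = P(f) ∩ ℤ^V for an integral bisubmodular function f and p ∈ B. If s_u + s_v ∈ Φ_B(p) and −s_v + s_w ∈ Φ_B(p) with s_u ≠ −s_w (for s_u ∈ {±χ_u}, s_v ∈ {±χ_v}, s_w ∈ {±χ_w}), then either s_u + s_w ∈ Φ_B(p), or both s_u ∈ Φ_B(p) and s_w ∈ Φ_B(p). -/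
open Finset

def IsSignedUnit {V : Type*} [DecidableEq V] (w : V) (s : V → ℤ) : Prop :=
  s = Pi.single w 1 ∨ s = -Pi.single w 1

namespace IsSignedUnit

variable {V : Type*} [DecidableEq V] {w : V} {s t : V → ℤ}

theorem neg (hs : IsSignedUnit w s) : IsSignedUnit w (-s) := by
  rcases hs with rfl | rfl
  exacts [Or.inr rfl, Or.inl (neg_neg _)]

theorem apply_self_ne_zero (hs : IsSignedUnit w s) : s w ≠ 0 := by
  rcases hs with rfl | rfl <;> simp

theorem ne_zero (hs : IsSignedUnit w s) : s ≠ 0 :=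
  fun h => hs.apply_self_ne_zero (congrFun h w)

theorem eq_of_ne_neg (hs : IsSignedUnit w s) (ht : IsSignedUnit w t) (hst : s ≠ -t) :
    s = t := by
  rcases hs with rfl | rfl <;> rcases ht with rfl | rfl
  · rfl
  · exact absurd (neg_neg _).symm hst
  · exact absurd rfl hst
  · rfl

end IsSignedUnit

theorem Preceq.trans {V : Type*} {x y z : V → ℤ} (hxy : Preceq x y) (hyz : Preceq y z) :
    Preceq x z := fun u hu => by
  rw [hyz u (by rw [hxy u hu]; exact hu), hxy u hu]

theorem Preceq.ne_zero {V : Type*} {x y : V → ℤ} (hxy : Preceq x y) (hx : x ≠ 0) : y ≠ 0 := by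
  obtain ⟨u, hu⟩ := Function.ne_iff.mp hx
  intro hy
  exact hu ((hxy u hu).symm.trans (congrFun hy u))

theorem bigSqcap_apply_ne_neg {V : Type*} {S : Set (V → ℤ)} {w : V} {a : ℤ} (ha : a ≠ 0)
    (hS : ∀ x ∈ S, x w = a) : bigSqcap S w ≠ -a := by
  unfold bigSqcap
  split_ifs with h₁ h₂
  · obtain ⟨⟨x, hx⟩, hall⟩ := h₁
    have := hS x hx
    have := hall x hx
    omega
  · obtain ⟨⟨x, hx⟩, hall⟩ := h₂
    have := hS x hx
    have := hall x hx
    omega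
  · omega

/-- Every tight vector defining `dep f p s` agrees with `s` on its support, so `dep f p s`
can never take the opposite sign there. -/
theorem not_preceq_neg_dep {V : Type*} [Fintype V] (f : (V → ℤ) → WithTop ℤ) (p : V → ℤ)
    {s : V → ℤ} (hs : s ≠ 0) : ¬ Preceq (-s) (dep f p s) := by
  obtain ⟨w, hw⟩ := Function.ne_iff.mp hs
  intro h
  exact bigSqcap_apply_ne_neg hw (fun x hx => hx.2.1 w hw) (h w (neg_ne_zero.mpr hw))

section ExchangeFacts

variable {V : Type*} [Fintype V] [DecidableEq V]

/- The three parts of Lemma 5 of the paper, for a fixed point `p` of `B = BSet f`. -/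

def UnitStepIff (f : (V → ℤ) → WithTop ℤ) (p : V → ℤ) : Prop :=
  ∀ (w : V) (s : V → ℤ), IsSignedUnit w s → (p + s ∈ BSet f ↔ dep f p s = 0)

def PairStepIff (f : (V → ℤ) → WithTop ℤ) (p : V → ℤ) : Prop :=
  ∀ (w w' : V), w ≠ w' → ∀ s t : V → ℤ, IsSignedUnit w s → IsSignedUnit w' t →
    p + s ∉ BSet f → (p + (s + t) ∈ BSet f ↔ Preceq (-t) (dep f p s))

def DepMonotone (f : (V → ℤ) → WithTop ℤ) (p : V → ℤ) : Prop :=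
  ∀ (w w' : V) (s t : V → ℤ), IsSignedUnit w s → IsSignedUnit w' t →
    Preceq s (dep f p t) → Preceq s (dep f p s) ∧ Preceq (dep f p s) (dep f p t)

/-- `-t ⪯ dep f p s` directly, and `-r ⪯ dep f p (-t) ⪯ dep f p s` by monotonicity of `dep`. -/
theorem add_mem_of_not_mem_of_add_mem_of_add_mem {f : (V → ℤ) → WithTop ℤ} {p : V → ℤ}
    (hunit : UnitStepIff f p) (hpair : PairStepIff f p) (hmono : DepMonotone f p)
    {a b c : V} {s t r : V → ℤ} (hs : IsSignedUnit a s) (ht : IsSignedUnit b t)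
    (hr : IsSignedUnit c r) (hab : a ≠ b) (hbc : b ≠ c) (hsr : s ≠ -r)
    (hs_nmem : p + s ∉ BSet f) (hst : p + (s + t) ∈ BSet f) (htr : p + (-t + r) ∈ BSet f) :
    a ≠ c ∧ p + (s + r) ∈ BSet f := by
  have ht_dep : Preceq (-t) (dep f p s) := (hpair a b hab s t hs ht hs_nmem).mp hst
  obtain ⟨ht_self, ht_mono⟩ := hmono b a (-t) s ht.neg hs ht_dep
  have ht_nmem : p + -t ∉ BSet f := fun hmem =>
    ht_self.ne_zero (neg_ne_zero.mpr ht.ne_zero) ((hunit b (-t) ht.neg).mp hmem)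
  have hr_dep : Preceq (-r) (dep f p s) :=
    ((hpair b c hbc (-t) r ht.neg hr ht_nmem).mp htr).trans ht_mono
  have hac : a ≠ c := by
    rintro rfl
    rw [← hs.eq_of_ne_neg hr hsr] at hr_dep
    exact not_preceq_neg_dep f p hs.ne_zero hr_dep
  exact ⟨hac, (hpair a c hac s r hs hr hs_nmem).mpr hr_dep⟩

end ExchangeFacts

theorem stmt13_general {V : Type*} [Fintype V] [DecidableEq V]
    (f : (V → ℤ) → WithTop ℤ)
    (p : V → ℤ)
    (hlem1 : ∀ (w : V) (s : V → ℤ),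
      (s = Pi.single w 1 ∨ s = -Pi.single w 1) →
      (p + s ∈ BSet f ↔ dep f p s = 0))
    (hlem2 : ∀ (w w' : V), w ≠ w' → ∀ s t : V → ℤ,
      (s = Pi.single w 1 ∨ s = -Pi.single w 1) →
      (t = Pi.single w' 1 ∨ t = -Pi.single w' 1) →
      p + s ∉ BSet f → (p + (s + t) ∈ BSet f ↔ Preceq (-t) (dep f p s)))
    (hlem3 : ∀ (w w' : V) (s t : V → ℤ),
      (s = Pi.single w 1 ∨ s = -Pi.single w 1) →
      (t = Pi.single w' 1 ∨ t = -Pi.single w' 1) →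
      Preceq s (dep f p t) →
      Preceq s (dep f p s) ∧ Preceq (dep f p s) (dep f p t))
    (u v w : V) (huv : u ≠ v) (hvw : v ≠ w)
    (su sv sw : V → ℤ)
    (hsu : su = Pi.single u 1 ∨ su = -Pi.single u 1)
    (hsv : sv = Pi.single v 1 ∨ sv = -Pi.single v 1)
    (hsw : sw = Pi.single w 1 ∨ sw = -Pi.single w 1)
    (hne : su ≠ -sw)
    (h1 : p + (su + sv) ∈ BSet f) (h2 : p + (-sv + sw) ∈ BSet f) :
    (u ≠ w ∧ p + (su + sw) ∈ BSet f) ∨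
      (p + su ∈ BSet f ∧ p + sw ∈ BSet f) := by
  by_cases hu : p + su ∈ BSet f
  · by_cases hw : p + sw ∈ BSet f
    · exact Or.inr ⟨hu, hw⟩
    · -- the same short-cut, run backwards from `sw` through `-sv` to `su`
      have hswu := add_mem_of_not_mem_of_add_mem_of_add_mem hlem1 hlem2 hlem3
        hsw (IsSignedUnit.neg hsv) hsu hvw.symm huv.symm (fun h => hne (by rw [h, neg_neg]))
        hw (by rwa [add_comm sw]) (by rwa [neg_neg, add_comm sv])
      exact Or.inl ⟨hswu.1.symm, add_comm sw su ▸ hswu.2⟩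
  · exact Or.inl (add_mem_of_not_mem_of_add_mem_of_add_mem hlem1 hlem2 hlem3
      hsu hsv hsw huv hvw hne hu h1 h2)

theorem stmt13 {V : Type*} [Fintype V] [DecidableEq V] [Nonempty V]
    (f : (V → ℤ) → WithTop ℤ) (hf0 : f 0 = 0) (hf : Bisubmodular f)
    (p : V → ℤ) (hp : p ∈ BSet f)
    (hlem1 : ∀ (w : V) (s : V → ℤ),
      (s = Pi.single w 1 ∨ s = -Pi.single w 1) →
      (p + s ∈ BSet f ↔ dep f p s = 0))
    (hlem2 : ∀ (w w' : V), w ≠ w' → ∀ s t : V → ℤ,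
      (s = Pi.single w 1 ∨ s = -Pi.single w 1) →
      (t = Pi.single w' 1 ∨ t = -Pi.single w' 1) →
      p + s ∉ BSet f → (p + (s + t) ∈ BSet f ↔ Preceq (-t) (dep f p s)))
    (hlem3 : ∀ (w w' : V) (s t : V → ℤ),
      (s = Pi.single w 1 ∨ s = -Pi.single w 1) →
      (t = Pi.single w' 1 ∨ t = -Pi.single w' 1) →
      Preceq s (dep f p t) →
      Preceq s (dep f p s) ∧ Preceq (dep f p s) (dep f p t))
    (u v w : V) (huv : u ≠ v) (hvw : v ≠ w)
    (su sv sw : V → ℤ)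
    (hsu : su = Pi.single u 1 ∨ su = -Pi.single u 1)
    (hsv : sv = Pi.single v 1 ∨ sv = -Pi.single v 1)
    (hsw : sw = Pi.single w 1 ∨ sw = -Pi.single w 1)
    (hne : su ≠ -sw)
    (h1 : p + (su + sv) ∈ BSet f) (h2 : p + (-sv + sw) ∈ BSet f) :
    (u ≠ w ∧ p + (su + sw) ∈ BSet f) ∨
      (p + su ∈ BSet f ∧ p + sw ∈ BSet f) :=
  stmt13_general f p hlem1 hlem2 hlem3 u v w huv hvw su sv sw hsu hsv hsw hne h1 h2
end
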